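/- Let μ, ν ∈ 𝓜 with μ(ℝ) ≤ ν(ℝ), and let S^ν(μ) be the generalized shadow measure. Then for every θ ∈ 𝒯_{μ,ν} and every k ∈ ℝ one has P_μ(k) ≤ P_{S^ν(μ)}(k) + p_{S^ν(μ)} ≤ P_θ(k) + p_θ, and moreover p_{S^ν(μ)} ≤ p_θ, where p_θ := sup_{k∈ℝ}(P_μ(k) − P_θ(k)). -/

import Mathlib

open MeasureTheory Set Filter

noncomputable section

/-- Total mass of a measure on ℝ, as a real number. -/
def mass (η : Measure ℝ) : ℝ := (η univ).toReal

/-- Mean (first moment) of a measure on ℝ. -/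
def mean (η : Measure ℝ) : ℝ := ∫ x, x ∂η

/-- `η ∈ 𝓜`: finite Borel measure on ℝ with finite first moment. -/
def MemM (η : Measure ℝ) : Prop := IsFiniteMeasure η ∧ Integrable (fun x => x) η

/-- Put potential `P_η(k) = ∫ (k-x)⁺ dη`. -/
def Pput (η : Measure ℝ) (k : ℝ) : ℝ := ∫ x, max (k - x) 0 ∂η

/-- Call potential `C_η(k) = ∫ (x-k)⁺ dη`. -/
def Ccall (η : Measure ℝ) (k : ℝ) : ℝ := ∫ x, max (x - k) 0 ∂η

/-- `p_{μ,ν} = sup_k (P_μ(k) - P_ν(k))`. -/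
def pconst (μ ν : Measure ℝ) : ℝ := ⨆ k : ℝ, (Pput μ k - Pput ν k)

/-- `c_{μ,ν} = sup_k (C_μ(k) - C_ν(k))`. -/
def cconst (μ ν : Measure ℝ) : ℝ := ⨆ k : ℝ, (Ccall μ k - Ccall ν k)

/-- `π ∈ Π(μ,ν)`: coupling with marginals μ and ν. -/
def IsCoupling (μ ν : Measure ℝ) (π : Measure (ℝ × ℝ)) : Prop :=
  π.fst = μ ∧ π.snd = ν

open Classical in
/-- Barycenter `π̄_x = ∫ y π_x(dy)` of the disintegration of π at x. -/
def bar (π : Measure (ℝ × ℝ)) (x : ℝ) : ℝ :=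
  if h : IsFiniteMeasure π then
    haveI := h
    ∫ y, y ∂(π.condKernel x)
  else 0

/-- Weak `L¹` transport cost `∫ |x - π̄_x| μ(dx)`. -/
def WOTcost (μ : Measure ℝ) (π : Measure (ℝ × ℝ)) : ℝ := ∫ x, |x - bar π x| ∂μ

/-- `V(μ,ν) = inf over couplings of the weak L¹ cost`. -/
def V (μ ν : Measure ℝ) : ℝ :=
  sInf {r | ∃ π, IsCoupling μ ν π ∧ r = WOTcost μ π}

/-- Martingale couplings. -/
def IsMartCoupling (μ ν : Measure ℝ) (π : Measure (ℝ × ℝ)) : Prop :=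
  IsCoupling μ ν π ∧ ∀ᵐ x ∂μ, bar π x = x

/-- Supermartingale couplings. -/
def IsSupCoupling (μ ν : Measure ℝ) (π : Measure (ℝ × ℝ)) : Prop :=
  IsCoupling μ ν π ∧ ∀ᵐ x ∂μ, bar π x ≤ x

/-- Submartingale couplings. -/
def IsSubCoupling (μ ν : Measure ℝ) (π : Measure (ℝ × ℝ)) : Prop :=
  IsCoupling μ ν π ∧ ∀ᵐ x ∂μ, x ≤ bar π x

/-- `x⁻ = inf {k : P_ν(k) + p_{μ,ν} = P_μ(k)}`. -/
def xminus (μ ν : Measure ℝ) : ℝ := sInf {k | Pput ν k + pconst μ ν = Pput μ k}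

/-- `x⁺ = sup {k : P_ν(k) + p_{μ,ν} = P_μ(k)}`. -/
def xplus (μ ν : Measure ℝ) : ℝ := sSup {k | Pput ν k + pconst μ ν = Pput μ k}

/-- Left derivative. -/
def leftD (f : ℝ → ℝ) (x : ℝ) : ℝ := derivWithin f (Iio x) x

/-- Right derivative. -/
def rightD (f : ℝ → ℝ) (x : ℝ) : ℝ := derivWithin f (Ioi x) x

/-- `η⁻ = μ|_{(-∞,x⁻)}`. -/
def etaMinus (μ ν : Measure ℝ) : Measure ℝ := μ.restrict (Iio (xminus μ ν))

/-- `η⁰ = μ|_{[x⁻,x⁺]}`. -/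
def etaZero (μ ν : Measure ℝ) : Measure ℝ := μ.restrict (Icc (xminus μ ν) (xplus μ ν))

/-- `η⁺ = μ|_{(x⁺,∞)}`. -/
def etaPlus (μ ν : Measure ℝ) : Measure ℝ := μ.restrict (Ioi (xplus μ ν))

/-- `χ⁻ = ν|_{(-∞,x⁻)} + (Δ⁻ - P_ν'(x⁻-)) δ_{x⁻}`. -/
def chiMinus (μ ν : Measure ℝ) : Measure ℝ :=
  ν.restrict (Iio (xminus μ ν)) +
    (ENNReal.ofReal (leftD (Pput μ) (xminus μ ν) - leftD (Pput ν) (xminus μ ν))) •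
      Measure.dirac (xminus μ ν)

/-- `χ⁺ = ν|_{(x⁺,∞)} + (Δ⁺ - P_ν'(x⁺+)) δ_{x⁺}`. -/
def chiPlus (μ ν : Measure ℝ) : Measure ℝ :=
  ν.restrict (Ioi (xplus μ ν)) +
    (ENNReal.ofReal (rightD (Pput μ) (xplus μ ν) - rightD (Pput ν) (xplus μ ν))) •
      Measure.dirac (xplus μ ν)

/-- `χ⁰ = ν - χ⁻ - χ⁺`. -/
def chiZero (μ ν : Measure ℝ) : Measure ℝ := ν - chiMinus μ ν - chiPlus μ ν

/-- `Π*(μ,ν)`: couplings of the form sub + martingale + super on the decomposition. -/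
def PiStar (μ ν : Measure ℝ) : Set (Measure (ℝ × ℝ)) :=
  {π | IsCoupling μ ν π ∧
    ∃ πm π0 πp : Measure (ℝ × ℝ),
      π = πm + π0 + πp ∧
      IsSubCoupling (etaMinus μ ν) (chiMinus μ ν) πm ∧
      IsMartCoupling (etaZero μ ν) (chiZero μ ν) π0 ∧
      IsSupCoupling (etaPlus μ ν) (chiPlus μ ν) πp}

/-- Convex order `η ≤_c χ`. -/
def CxOrder (η χ : Measure ℝ) : Prop :=
  ∀ f : ℝ → ℝ, ConvexOn ℝ univ f → Integrable f η → Integrable f χ →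
    ∫ x, f x ∂η ≤ ∫ x, f x ∂χ

/-- Convex decreasing order `η ≤_cd χ`. -/
def CdOrder (η χ : Measure ℝ) : Prop :=
  ∀ f : ℝ → ℝ, ConvexOn ℝ univ f → Antitone f → Integrable f η → Integrable f χ →
    ∫ x, f x ∂η ≤ ∫ x, f x ∂χ

/-- Convex increasing order `η ≤_ci χ`. -/
def CiOrder (η χ : Measure ℝ) : Prop :=
  ∀ f : ℝ → ℝ, ConvexOn ℝ univ f → Monotone f → Integrable f η → Integrable f χ →
    ∫ x, f x ∂η ≤ ∫ x, f x ∂χ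

/-- Convex hull (largest convex minorant) of a function. -/
def convHullFn (f : ℝ → ℝ) : ℝ → ℝ :=
  fun x => sSup {v : ℝ | ∃ g : ℝ → ℝ, ConvexOn ℝ univ g ∧ (∀ y, g y ≤ f y) ∧ v = g x}

/-- `S` is the generalized shadow measure of μ in ν, characterized by its put potential. -/
def IsShadow (μ ν S : Measure ℝ) : Prop :=
  MemM S ∧
    ∀ k, Pput S k = Pput ν k - convHullFn (fun t => Pput ν t - Pput μ t) k - pconst μ ν

/-- `𝒯_{μ,ν}`: possible target laws of μ in ν. -/
def TargetSet (μ ν : Measure ℝ) : Set (Measure ℝ) :=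
  {θ | MemM θ ∧ mass θ = mass μ ∧ θ ≤ ν}


lemma integrable_put {η : Measure ℝ} (hη : MemM η) (k : ℝ) :
    Integrable (fun x => max (k - x) 0) η := by
  haveI := hη.1
  have h := ((integrable_const k).sub hη.2).pos_part
  simpa using h

lemma integrable_call {η : Measure ℝ} (hη : MemM η) (k : ℝ) :
    Integrable (fun x => max (x - k) 0) η := by
  haveI := hη.1
  have h := (hη.2.sub (integrable_const k)).pos_part
  simpa using h

lemma Pput_nonneg (η : Measure ℝ) (k : ℝ) : 0 ≤ Pput η k :=
  integral_nonneg fun _ => le_max_right _ _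

lemma integral_linear {η : Measure ℝ} (hη : MemM η) (k : ℝ) :
    ∫ x, (k - x) ∂η = k * mass η - mean η := by
  haveI := hη.1
  rw [integral_sub (integrable_const k) hη.2, integral_const, smul_eq_mul, mul_comm]
  rfl

lemma Pput_mono {η : Measure ℝ} (hη : MemM η) {k k' : ℝ} (h : k ≤ k') :
    Pput η k ≤ Pput η k' :=
  integral_mono (integrable_put hη k) (integrable_put hη k')
    (fun x => max_le_max (by linarith) le_rfl)

lemma Ccall_anti {η : Measure ℝ} (hη : MemM η) {k k' : ℝ} (h : k ≤ k') :
    Ccall η k' ≤ Ccall η k :=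
  integral_mono (integrable_call hη k') (integrable_call hη k)
    (fun x => max_le_max (by linarith) le_rfl)

lemma Pput_parity {η : Measure ℝ} (hη : MemM η) (k : ℝ) :
    Pput η k = Ccall η k + (k * mass η - mean η) := by
  have h : ∀ x : ℝ, max (k - x) 0 = max (x - k) 0 + (k - x) := by
    intro x
    rcases le_total x k with h | h
    · rw [max_eq_left (by linarith), max_eq_right (by linarith)]; ring
    · rw [max_eq_right (by linarith), max_eq_left (by linarith)]; ring
  calc Pput η k = ∫ x, (max (x - k) 0 + (k - x)) ∂η := by
        unfold Pput; exact integral_congr_ae (Eventually.of_forall h)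
    _ = Ccall η k + (k * mass η - mean η) := by
        haveI := hη.1
        have hsub : Integrable (fun x => k - x) η := (integrable_const k).sub hη.2
        rw [integral_add (integrable_call hη k) hsub, integral_linear hη]
        rfl

lemma Pput_ge_linear {η : Measure ℝ} (hη : MemM η) (k : ℝ) :
    k * mass η - mean η ≤ Pput η k := by
  haveI := hη.1
  rw [← integral_linear hη k]
  exact integral_mono ((integrable_const k).sub hη.2) (integrable_put hη k)
    (fun x => le_max_left _ _)

lemma pdiff_bdd {μ η : Measure ℝ} (hμ : MemM μ) (hη : MemM η) (hm : mass μ ≤ mass η)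
    (k : ℝ) : Pput μ k - Pput η k ≤ max (Pput μ 0) (Ccall μ 0 - mean μ + mean η) := by
  rcases le_total k 0 with hk | hk
  · have h1 := Pput_mono hμ hk
    have h2 := Pput_nonneg η k
    exact le_trans (by linarith) (le_max_left _ _)
  · have h1 := Ccall_anti hμ hk
    have h2 := Pput_ge_linear hη k
    have h3 := Pput_parity hμ k
    have h4 : k * mass μ ≤ k * mass η := mul_le_mul_of_nonneg_left hm hk
    exact le_trans (by linarith) (le_max_right _ _)

lemma convHull_le {f : ℝ → ℝ} (hne : ∃ g : ℝ → ℝ, ConvexOn ℝ univ g ∧ ∀ y, g y ≤ f y)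
    (k : ℝ) : convHullFn f k ≤ f k := by
  obtain ⟨g, hg, hgf⟩ := hne
  refine csSup_le ⟨g k, g, hg, hgf, rfl⟩ ?_
  rintro v ⟨g', hg', hg'f, rfl⟩
  exact hg'f k

lemma le_convHull {f g : ℝ → ℝ} (hg : ConvexOn ℝ univ g) (hgf : ∀ y, g y ≤ f y)
    (k : ℝ) : g k ≤ convHullFn f k := by
  refine le_csSup ⟨f k, ?_⟩ ⟨g, hg, hgf, rfl⟩
  rintro v ⟨g', hg', hg'f, rfl⟩
  exact hg'f k

lemma Pput_convexOn (ρ : Measure ℝ) (hInt : ∀ k, Integrable (fun x => max (k - x) 0) ρ) :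
    ConvexOn ℝ univ (Pput ρ) := by
  refine ⟨convex_univ, fun x _ y _ a b ha hb hab => ?_⟩
  simp only [smul_eq_mul]
  have key : ∀ t, max (a * x + b * y - t) 0 ≤ a * max (x - t) 0 + b * max (y - t) 0 := by
    intro t
    have h1 : a * x + b * y - t = a * (x - t) + b * (y - t) := by
      linear_combination t * hab
    refine max_le ?_ ?_
    · rw [h1]
      exact add_le_add (mul_le_mul_of_nonneg_left (le_max_left _ _) ha)
        (mul_le_mul_of_nonneg_left (le_max_left _ _) hb)
    · exact add_nonneg (mul_nonneg ha (le_max_right _ _)) (mul_nonneg hb (le_max_right _ _))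
  calc Pput ρ (a * x + b * y)
      ≤ ∫ t, (a * max (x - t) 0 + b * max (y - t) 0) ∂ρ :=
        integral_mono (hInt _) (((hInt x).const_mul a).add ((hInt y).const_mul b)) key
    _ = a * Pput ρ x + b * Pput ρ y := by
        rw [integral_add ((hInt x).const_mul a) ((hInt y).const_mul b),
          integral_const_mul, integral_const_mul]
        rfl


theorem stmt_13 (μ ν S : Measure ℝ) (hμ : MemM μ) (hν : MemM ν)
    (hmass : mass μ ≤ mass ν) (hS : IsShadow μ ν S) :
    ∀ θ ∈ TargetSet μ ν,
      (∀ k, Pput μ k ≤ Pput S k + pconst μ S ∧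
        Pput S k + pconst μ S ≤ Pput θ k + pconst μ θ) ∧
      pconst μ S ≤ pconst μ θ := by
  rintro θ ⟨hθM, hθmass, hθν⟩
  haveI := hν.1
  haveI := hθM.1
  have hmθ : mass μ ≤ mass θ := le_of_eq hθmass.symm
  -- boundedness facts
  have hBν : ∀ k, Pput μ k - Pput ν k ≤ max (Pput μ 0) (Ccall μ 0 - mean μ + mean ν) :=
    pdiff_bdd hμ hν hmass
  have hBθ : ∀ k, Pput μ k - Pput θ k ≤ max (Pput μ 0) (Ccall μ 0 - mean μ + mean θ) :=
    pdiff_bdd hμ hθM hmθ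
  have bddθ : BddAbove (range fun k => Pput μ k - Pput θ k) := by
    refine ⟨max (Pput μ 0) (Ccall μ 0 - mean μ + mean θ), ?_⟩
    rintro _ ⟨k, rfl⟩; exact hBθ k
  -- convex minorant existence for f = Pput ν - Pput μ
  have hne : ∃ g : ℝ → ℝ, ConvexOn ℝ univ g ∧
      ∀ y, g y ≤ Pput ν y - Pput μ y :=
    ⟨fun _ => -(max (Pput μ 0) (Ccall μ 0 - mean μ + mean ν)),
      convexOn_const _ convex_univ, fun y => by have := hBν y; dsimp only; linarith⟩
  have hcf : ∀ k, convHullFn (fun t => Pput ν t - Pput μ t) k ≤ Pput ν k - Pput μ k :=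
    convHull_le hne
  -- pconst μ S ≤ pconst μ ν
  have hpS : pconst μ S ≤ pconst μ ν := by
    refine ciSup_le fun k => ?_
    rw [hS.2 k]
    have h1 := hcf k
    have h2 : Pput μ k - Pput ν k ≤ pconst μ ν := by
      simp only [pconst]
      refine le_ciSup (f := fun j => Pput μ j - Pput ν j) ?_ k
      refine ⟨max (Pput μ 0) (Ccall μ 0 - mean μ + mean ν), ?_⟩
      rintro _ ⟨j, rfl⟩; exact hBν j
    linarith
  -- Pput θ ≤ Pput ν
  have hPθν : ∀ k, Pput θ k ≤ Pput ν k := fun k =>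
    integral_mono_measure hθν (Eventually.of_forall fun x => le_max_right _ _)
      (integrable_put hν k)
  -- pconst μ ν ≤ pconst μ θ
  have hpν : pconst μ ν ≤ pconst μ θ :=
    ciSup_mono bddθ fun k => by have := hPθν k; linarith
  -- the witness g₀ = Pput ν - Pput θ - pconst μ θ is a convex minorant of f
  have hg0f : ∀ y, Pput ν y - Pput θ y - pconst μ θ ≤ Pput ν y - Pput μ y := by
    intro y
    have := le_ciSup bddθ y
    simp only [pconst]
    linarith [le_ciSup bddθ y]
  have hint_sub : ∀ k, Integrable (fun x => max (k - x) 0) (ν - θ) := fun k =>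
    (integrable_put hν k).mono_measure Measure.sub_le
  have hsplit : ∀ k, Pput ν k = Pput (ν - θ) k + Pput θ k := by
    intro k
    have hdec : ν - θ + θ = ν := Measure.sub_add_cancel_of_le hθν
    calc Pput ν k = ∫ x, max (k - x) 0 ∂(ν - θ + θ) := by rw [hdec]; rfl
      _ = Pput (ν - θ) k + Pput θ k :=
        integral_add_measure (hint_sub k) (integrable_put (⟨hθM.1, hθM.2⟩) k)
  have hg0conv : ConvexOn ℝ univ (fun t => Pput ν t - Pput θ t - pconst μ θ) := by
    have h1 : ConvexOn ℝ univ (fun t => Pput (ν - θ) t + (-(pconst μ θ))) :=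
      (Pput_convexOn (ν - θ) hint_sub).add (convexOn_const _ convex_univ)
    have h2 : (fun t => Pput ν t - Pput θ t - pconst μ θ)
        = fun t => Pput (ν - θ) t + (-(pconst μ θ)) := by
      funext t; rw [hsplit t]; ring
    rw [h2]; exact h1
  have hg0c : ∀ k, Pput ν k - Pput θ k - pconst μ θ ≤
      convHullFn (fun t => Pput ν t - Pput μ t) k :=
    le_convHull hg0conv hg0f
  refine ⟨fun k => ⟨?_, ?_⟩, le_trans hpS hpν⟩
  · have h1 : Pput μ k - Pput S k ≤ pconst μ S := by
      simp only [pconst]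
      refine le_ciSup (f := fun j => Pput μ j - Pput S j) ?_ k
      refine ⟨pconst μ ν, ?_⟩
      rintro _ ⟨j, rfl⟩
      show Pput μ j - Pput S j ≤ pconst μ ν
      rw [hS.2 j]
      have h2 := hcf j
      linarith
    linarith
  · rw [hS.2 k]
    have h1 := hg0c k
    linarith


end
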